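/- arXiv:1410.7596 — 2 statements merged into one kernel-verified Lean document; each statement's English description precedes it below -/
import Mathlib

section
/- Let c_1, …, c_T ∈ ℝ^d be fixed vectors with mean ω := (1/T) Σ_{i=1}^T c_i, and let π be a uniformly random permutation of {1,…,T}. Then: (i) for every t and every realization of π, the conditional expectation E[ c_{π(t)} | π(1),…,π(t−1) ] equals (1/(T−t+1)) Σ_{i ∉ {π(1),…,π(t−1)}} c_i, the average of the not-yet-revealed vectors; and (ii) E[ Σ_{t=1}^T ‖ E[ c_{π(t)} | π(1),…,π(t−1) ] − ω ‖ ] = E[ Σ_{t=1}^T ‖ (1/t) Σ_{i=1}^t c_{π(i)} − ω ‖ ], i.e. the total conditional-mean drift in the random permutation model equals in expectation the total deviation of prefix averages of a uniformly random permutation. -/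
open Finset

noncomputable section

/-- Dot product on `ℝ^d`. -/
def dotp {d : ℕ} (x y : Fin d → ℝ) : ℝ := ∑ i, x i * y i

/-- The unit cube `[0,1]^d`. -/
def cube (d : ℕ) : Set (Fin d → ℝ) := Set.Icc 0 1

/-- `nrm` is a norm on `ℝ^d`. -/
structure IsNorm {d : ℕ} (nrm : (Fin d → ℝ) → ℝ) : Prop where
  eq_zero_iff : ∀ x, nrm x = 0 ↔ x = 0
  smul_eq : ∀ (a : ℝ) (x : Fin d → ℝ), nrm (a • x) = |a| * nrm x
  add_le : ∀ x y, nrm (x + y) ≤ nrm x + nrm y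

/-- Dual norm of `nrm`. -/
def dualNorm {d : ℕ} (nrm : (Fin d → ℝ) → ℝ) (y : Fin d → ℝ) : ℝ :=
  sSup {r | ∃ x, nrm x ≤ 1 ∧ r = dotp x y}

/-- Distance from `x` to the set `S`, w.r.t. the norm `nrm`. -/
def distN {d : ℕ} (nrm : (Fin d → ℝ) → ℝ) (S : Set (Fin d → ℝ)) (x : Fin d → ℝ) : ℝ :=
  sInf ((fun y => nrm (x - y)) '' S)

/-- Support function of `S`. -/
def suppF {d : ℕ} (S : Set (Fin d → ℝ)) (θ : Fin d → ℝ) : ℝ :=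
  sSup ((fun y => dotp θ y) '' S)

/-- All-ones vector in `ℝ^d`. -/
def ones (d : ℕ) : Fin d → ℝ := fun _ => 1

/-- Expectation of a real quantity over a uniformly random permutation of `{0,…,T-1}`. -/
def pexp (T : ℕ) (F : Equiv.Perm (Fin T) → ℝ) : ℝ :=
  (∑ π : Equiv.Perm (Fin T), F π) / (Fintype.card (Equiv.Perm (Fin T)) : ℝ)

/-- Expectation of a vector quantity over a uniformly random permutation. -/
def pexpV (T d : ℕ) (F : Equiv.Perm (Fin T) → (Fin d → ℝ)) : Fin d → ℝ :=
  (Fintype.card (Equiv.Perm (Fin T)) : ℝ)⁻¹ • ∑ π : Equiv.Perm (Fin T), F π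

open scoped Classical in
/-- Probability of an event under a uniformly random permutation. -/
def pprob (T : ℕ) (E : Equiv.Perm (Fin T) → Prop) : ℝ :=
  ((Finset.univ.filter E).card : ℝ) / (Fintype.card (Equiv.Perm (Fin T)) : ℝ)

open scoped Classical in
/-- Permutations agreeing with `π` on the first `t` positions. -/
def agreeSet {T : ℕ} (t : ℕ) (π : Equiv.Perm (Fin T)) : Finset (Equiv.Perm (Fin T)) :=
  Finset.univ.filter (fun σ => ∀ s : Fin T, (s : ℕ) < t → σ s = π s)

/-- Conditional expectation given the first `t` positions of the permutation. -/
def condE {T : ℕ} (F : Equiv.Perm (Fin T) → ℝ) (t : ℕ) (π : Equiv.Perm (Fin T)) : ℝ :=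
  (∑ σ ∈ agreeSet t π, F σ) / ((agreeSet t π).card : ℝ)

/-- Vector-valued conditional expectation given the first `t` positions. -/
def condEV {T d : ℕ} (F : Equiv.Perm (Fin T) → (Fin d → ℝ)) (t : ℕ)
    (π : Equiv.Perm (Fin T)) : Fin d → ℝ :=
  (((agreeSet t π).card : ℝ))⁻¹ • ∑ σ ∈ agreeSet t π, F σ

/-- Sup norm on `ℝ^d`. -/
def supNorm {d : ℕ} (x : Fin d → ℝ) : ℝ := sSup {r | ∃ j, r = |x j|}

/-!
Conditioning on the first `t` positions leaves `σ t` uniformly distributed on the `T - t`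
unrevealed values: left multiplication by the transposition of two unrevealed values preserves
the conditioning event and swaps the corresponding fibres of `σ ↦ σ t`. This is (i).

For (ii), replace `π` by `π ∘ rev`, which does not change the expectation. The values unrevealed
before time `rev t` of `π ∘ rev` are `π 0, …, π t`, so by (i) the conditional mean at time
`rev t` becomes the prefix average `(t + 1)⁻¹ ∑_{i ≤ t} c (π i)`, and the two sums agree
term by term after reindexing by `rev`.
-/

namespace Finset

variable {α β : Type*} [DecidableEq β] {A : Finset α} {U : Finset β} {f : α → β} {m : ℕ}

theorem sum_comp_eq_nsmul_of_card_fiber {M : Type*} [AddCommMonoid M]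
    (hf : ∀ a ∈ A, f a ∈ U) (hm : ∀ b ∈ U, #{a ∈ A | f a = b} = m) (g : β → M) :
    ∑ a ∈ A, g (f a) = m • ∑ b ∈ U, g b := by
  rw [← sum_fiberwise_of_maps_to' hf, smul_sum]
  exact sum_congr rfl fun b hb => by rw [sum_const, hm b hb]

theorem average_comp_eq_average_of_card_fiber {E : Type*} [AddCommGroup E] [Module ℝ E]
    (hf : ∀ a ∈ A, f a ∈ U) (hm : ∀ b ∈ U, #{a ∈ A | f a = b} = m) (hm0 : m ≠ 0)
    (g : β → E) :
    (#A : ℝ)⁻¹ • ∑ a ∈ A, g (f a) = (#U : ℝ)⁻¹ • ∑ b ∈ U, g b := by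
  have hcard : #A = m * #U := by
    rw [card_eq_sum_ones, sum_comp_eq_nsmul_of_card_fiber hf hm (fun _ => 1), ← card_eq_sum_ones,
      smul_eq_mul]
  rw [sum_comp_eq_nsmul_of_card_fiber hf hm, ← Nat.cast_smul_eq_nsmul ℝ, smul_smul, hcard,
    Nat.cast_mul, mul_inv, mul_right_comm, inv_mul_cancel₀ (Nat.cast_ne_zero.2 hm0), one_mul]

end Finset

def unrevealed {T : ℕ} (t : ℕ) (π : Equiv.Perm (Fin T)) : Finset (Fin T) :=
  univ.filter fun i => ∀ s : Fin T, (s : ℕ) < t → π s ≠ i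

section Conditioning

variable {T : ℕ} {t : ℕ} {π σ : Equiv.Perm (Fin T)} {i j : Fin T}

theorem mem_agreeSet : σ ∈ agreeSet t π ↔ ∀ s : Fin T, (s : ℕ) < t → σ s = π s := by
  rw [agreeSet, mem_filter, and_iff_right (mem_univ σ)]

theorem mem_unrevealed : i ∈ unrevealed t π ↔ ∀ s : Fin T, (s : ℕ) < t → π s ≠ i := by
  rw [unrevealed, mem_filter, and_iff_right (mem_univ i)]

theorem apply_mem_unrevealed (hσ : σ ∈ agreeSet t π) {u : Fin T} (hu : t ≤ u) :
    σ u ∈ unrevealed t π := by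
  refine mem_unrevealed.2 fun s hs h => ?_
  rw [← mem_agreeSet.1 hσ s hs] at h
  exact (σ.injective h ▸ hs).not_ge hu

theorem swap_mul_mem_agreeSet (hσ : σ ∈ agreeSet t π) (hi : i ∈ unrevealed t π)
    (hj : j ∈ unrevealed t π) : Equiv.swap i j * σ ∈ agreeSet t π := by
  refine mem_agreeSet.2 fun s hs => ?_
  rw [Equiv.Perm.mul_apply, mem_agreeSet.1 hσ s hs]
  exact Equiv.swap_apply_of_ne_of_ne (mem_unrevealed.1 hi s hs) (mem_unrevealed.1 hj s hs)

theorem card_agreeSet_filter_apply_eq {u : Fin T} (hi : i ∈ unrevealed t π)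
    (hj : j ∈ unrevealed t π) :
    #{σ ∈ agreeSet t π | σ u = i} = #{σ ∈ agreeSet t π | σ u = j} := by
  have swap_maps : ∀ {k l}, k ∈ unrevealed t π → l ∈ unrevealed t π →
      Set.MapsTo (Equiv.swap k l * ·) (({σ ∈ agreeSet t π | σ u = k} : Finset _) : Set _)
        (({σ ∈ agreeSet t π | σ u = l} : Finset _) : Set _) := fun hk hl σ hσ => by
    rw [mem_coe, mem_filter] at hσ ⊢
    exact ⟨swap_mul_mem_agreeSet hσ.1 hk hl, by simp [hσ.2]⟩
  refine card_nbij' _ (Equiv.swap j i * ·) (swap_maps hi hj) (swap_maps hj hi) ?_ ?_ <;>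
    intro σ _ <;> simp [← mul_assoc, Equiv.swap_comm i j]

theorem card_unrevealed (π : Equiv.Perm (Fin T)) (t : Fin T) :
    #(unrevealed t π) = T - t := by
  have hcompl : (unrevealed t π)ᶜ = (Iio t).image π := by
    ext i
    simp only [mem_compl, mem_unrevealed, mem_image, mem_Iio, Fin.lt_def, not_forall, not_not,
      exists_prop]
  have := card_compl_add_card (unrevealed t π)
  rw [hcompl, card_image_of_injective _ π.injective, Fin.card_Iio, Fintype.card_fin] at this
  omega

theorem condEV_apply_eq_average_unrevealed {d : ℕ} (c : Fin T → Fin d → ℝ)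
    (π : Equiv.Perm (Fin T)) (t : Fin T) :
    condEV (fun σ => c (σ t)) t π = ((T : ℝ) - t)⁻¹ • ∑ i ∈ unrevealed t π, c i := by
  have hπ : π ∈ agreeSet t π := mem_agreeSet.2 fun _ _ => rfl
  have hπt : π t ∈ unrevealed t π := apply_mem_unrevealed hπ le_rfl
  rw [condEV, average_comp_eq_average_of_card_fiber
    (fun σ hσ => apply_mem_unrevealed hσ le_rfl)
    (fun i hi => card_agreeSet_filter_apply_eq hi hπt)
    (card_ne_zero_of_mem (mem_filter.2 ⟨hπ, rfl⟩)), card_unrevealed,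
    Nat.cast_sub t.is_lt.le]

end Conditioning

theorem unrevealed_rev_mul_revPerm {T : ℕ} (π : Equiv.Perm (Fin T)) (t : Fin T) :
    unrevealed (Fin.rev t) (π * Fin.revPerm)
      = (univ.filter fun i : Fin T => (i : ℕ) ≤ t).image π := by
  ext i
  simp only [mem_unrevealed, Equiv.Perm.mul_apply, Fin.revPerm_apply, mem_image, mem_filter,
    mem_univ, true_and]
  constructor
  · intro h
    refine ⟨π.symm i, ?_, π.apply_symm_apply i⟩
    by_contra hlt
    refine h (Fin.rev (π.symm i)) ?_ (by simp)
    simp only [Fin.val_rev]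
    omega
  · rintro ⟨j, hj, rfl⟩ s hs h
    have hsj := congrArg Fin.val (π.injective h)
    rw [Fin.val_rev] at hs hsj
    omega

theorem condEV_rev_mul_revPerm {T d : ℕ} (c : Fin T → Fin d → ℝ) (π : Equiv.Perm (Fin T))
    (t : Fin T) :
    condEV (fun σ => c (σ (Fin.rev t))) (Fin.rev t) (π * Fin.revPerm) =
      ((t : ℝ) + 1)⁻¹ • ∑ i ∈ univ.filter (fun i : Fin T => (i : ℕ) ≤ t),
        c (π i) := by
  have hT : (T : ℝ) - (Fin.rev t : ℕ) = t + 1 := by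
    rw [Fin.val_rev, Nat.cast_sub t.is_lt]
    push_cast
    ring
  rw [condEV_apply_eq_average_unrevealed, unrevealed_rev_mul_revPerm,
    sum_image fun _ _ _ _ h => π.injective h, hT]

theorem pexp_comp_mul_right {T : ℕ} (F : Equiv.Perm (Fin T) → ℝ) (ρ : Equiv.Perm (Fin T)) :
    pexp T (fun π => F (π * ρ)) = pexp T F := by
  rw [pexp, pexp, ← Equiv.sum_comp (Equiv.mulRight ρ) F]
  rfl

theorem stmt7_general
    (d : ℕ) (nrm : (Fin d → ℝ) → ℝ)
    (T : ℕ)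
    (c : Fin T → (Fin d → ℝ))
    (ω : Fin d → ℝ) :
    (∀ (π : Equiv.Perm (Fin T)) (t : Fin T),
      condEV (fun σ => c (σ t)) (t : ℕ) π
        = ((T : ℝ) - ((t : ℕ) : ℝ))⁻¹ •
            ∑ i ∈ Finset.univ.filter
              (fun i : Fin T => ∀ s : Fin T, (s : ℕ) < (t : ℕ) → π s ≠ i), c i) ∧
    pexp T (fun π => ∑ t : Fin T,
        nrm (condEV (fun σ => c (σ t)) (t : ℕ) π - ω))
      = pexp T (fun π => ∑ t : Fin T,
          nrm ((((t : ℕ) : ℝ) + 1)⁻¹ •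
              ∑ i ∈ Finset.univ.filter (fun i : Fin T => (i : ℕ) ≤ (t : ℕ)), c (π i)
            - ω)) := by
  refine ⟨condEV_apply_eq_average_unrevealed c, ?_⟩
  rw [← pexp_comp_mul_right _ Fin.revPerm]
  congr 1
  funext π
  rw [← Equiv.sum_comp Fin.revPerm]
  simp only [Fin.revPerm_apply, condEV_rev_mul_revPerm]

/-- for fixed vectors `c_1,…,c_T` with mean `ω` and a uniformly random
permutation `π`: (i) the conditional expectation of `c_{π(t)}` given the first `t−1`
revealed positions is the average of the not-yet-revealed vectors; (ii) the expected
total conditional-mean drift equals the expected total deviation of prefix averages. -/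
theorem stmt7
    (d : ℕ) (hd : 1 ≤ d) (nrm : (Fin d → ℝ) → ℝ) (hnrm : IsNorm nrm)
    (T : ℕ) (hT : 1 ≤ T)
    (c : Fin T → (Fin d → ℝ))
    (ω : Fin d → ℝ) (hω : ω = (T : ℝ)⁻¹ • ∑ i : Fin T, c i) :
    (∀ (π : Equiv.Perm (Fin T)) (t : Fin T),
      condEV (fun σ => c (σ t)) (t : ℕ) π
        = ((T : ℝ) - ((t : ℕ) : ℝ))⁻¹ •
            ∑ i ∈ Finset.univ.filter
              (fun i : Fin T => ∀ s : Fin T, (s : ℕ) < (t : ℕ) → π s ≠ i), c i) ∧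
    pexp T (fun π => ∑ t : Fin T,
        nrm (condEV (fun σ => c (σ t)) (t : ℕ) π - ω))
      = pexp T (fun π => ∑ t : Fin T,
          nrm ((((t : ℕ) : ℝ) + 1)⁻¹ •
              ∑ i ∈ Finset.univ.filter (fun i : Fin T => (i : ℕ) ≤ (t : ℕ)), c (π i)
            - ω)) :=
  stmt7_general d nrm T c ω
end
end

section
/- In the packing RP model, let Z ≥ 0, let (θ_t)_{t=1}^T be adapted with θ_t ≥ 0 and ‖θ_t‖_1 ≤ 1, let (r_t, v_t) ∈ argmax_{(r,v) ∈ A_t} ( r − Z θ_t·v ) for each t, and let τ be any stopping time with respect to the filtration F_{t} generated by (A_1,…,A_{t}). Let ((ρ*_i, u*_i))_{i=1}^T with (ρ*_i, u*_i) ∈ conv(X_i) be an optimal offline solution, i.e. (1/T)Σ_i ρ*_i = OPT and Σ_i u*_i ≤ B·1_d, and set (r*_t, v*_t) := (ρ*_{π(t)}, u*_{π(t)}). Then almost surely: Σ_{t=1}^{τ} E[ r_t | F_{t−1} ] ≥ τ·OPT + Z·Σ_{t=1}^{τ} θ_t · E[ v_t − (B/T)·1_d | F_{t−1} ] − Σ_{t=1}^{τ}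 Q(t), where Q(t) := Z·‖ E[v*_t] − E[v*_t | F_{t−1}] ‖_∞ + | E[r*_t] − E[r*_t | F_{t−1}] |. -/
open Finset

noncomputable section

section Stmt13Aux

variable {d T : ℕ}

lemma dotp_add' (θ x y : Fin d → ℝ) : dotp θ (x + y) = dotp θ x + dotp θ y := by
  simp [dotp, mul_add, Finset.sum_add_distrib]

lemma dotp_sub' (θ x y : Fin d → ℝ) : dotp θ (x - y) = dotp θ x - dotp θ y := by
  simp [dotp, mul_sub, Finset.sum_sub_distrib]

lemma dotp_smul' (θ : Fin d → ℝ) (a : ℝ) (x : Fin d → ℝ) :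
    dotp θ (a • x) = a * dotp θ x := by
  simp [dotp, Finset.mul_sum, mul_left_comm]

lemma dotp_finsetSum {ι : Type*} (S : Finset ι) (θ : Fin d → ℝ) (F : ι → Fin d → ℝ) :
    dotp θ (∑ σ ∈ S, F σ) = ∑ σ ∈ S, dotp θ (F σ) := by
  simp only [dotp, Finset.sum_apply, Finset.mul_sum]
  exact Finset.sum_comm

lemma abs_le_supNorm (x : Fin d → ℝ) (j : Fin d) : |x j| ≤ supNorm x := by
  apply le_csSup
  · have : {r | ∃ j, r = |x j|} = Set.range (fun j => |x j|) := by
      ext r; simp [Set.mem_range, eq_comm]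
    rw [this]; exact (Set.finite_range _).bddAbove
  · exact ⟨j, rfl⟩

lemma supNorm_nonneg (hd : 0 < d) (x : Fin d → ℝ) : 0 ≤ supNorm x :=
  (abs_nonneg _).trans (abs_le_supNorm x ⟨0, hd⟩)

lemma abs_dotp_le_supNorm (hd : 0 < d) (θ x : Fin d → ℝ) (h1 : ∑ j, |θ j| ≤ 1) :
    |dotp θ x| ≤ supNorm x := by
  have h0 := supNorm_nonneg hd x
  calc |dotp θ x| ≤ ∑ j, |θ j * x j| := Finset.abs_sum_le_sum_abs _ _
    _ = ∑ j, |θ j| * |x j| := by simp [abs_mul]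
    _ ≤ ∑ j, |θ j| * supNorm x := Finset.sum_le_sum fun j _ =>
        mul_le_mul_of_nonneg_left (abs_le_supNorm x j) (abs_nonneg _)
    _ = (∑ j, |θ j|) * supNorm x := by rw [Finset.sum_mul]
    _ ≤ 1 * supNorm x := mul_le_mul_of_nonneg_right h1 h0
    _ = supNorm x := one_mul _

lemma sum_perm_apply (T : ℕ) (t : Fin T) (g : Fin T → ℝ) :
    (T : ℝ) * ∑ σ : Equiv.Perm (Fin T), g (σ t)
      = (Fintype.card (Equiv.Perm (Fin T)) : ℝ) * ∑ i, g i := by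
  have h1 : ∀ i : Fin T, ∑ σ : Equiv.Perm (Fin T), g (σ i)
      = ∑ σ : Equiv.Perm (Fin T), g (σ t) := by
    intro i
    rw [← Equiv.sum_comp (Equiv.mulRight (Equiv.swap i t))
      (fun σ : Equiv.Perm (Fin T) => g (σ t))]
    refine Finset.sum_congr rfl fun σ _ => ?_
    simp [Equiv.Perm.mul_apply]
  have h2 : ∑ i : Fin T, ∑ σ : Equiv.Perm (Fin T), g (σ i)
      = (Fintype.card (Equiv.Perm (Fin T)) : ℝ) * ∑ i, g i := by
    rw [Finset.sum_comm]
    have hσ : ∀ σ : Equiv.Perm (Fin T), ∑ i, g (σ i) = ∑ i, g i :=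
      fun σ => Equiv.sum_comp σ g
    simp [hσ, Finset.sum_const, Finset.card_univ, nsmul_eq_mul]
  calc (T : ℝ) * ∑ σ : Equiv.Perm (Fin T), g (σ t)
      = ∑ _i : Fin T, ∑ σ : Equiv.Perm (Fin T), g (σ t) := by
        simp [Finset.sum_const, Finset.card_univ, nsmul_eq_mul]
    _ = ∑ i : Fin T, ∑ σ : Equiv.Perm (Fin T), g (σ i) :=
        Finset.sum_congr rfl fun i _ => (h1 i).symm
    _ = _ := h2

lemma pexp_eq_avg (T : ℕ) (t : Fin T) (g : Fin T → ℝ) :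
    pexp T (fun σ => g (σ t)) = (T : ℝ)⁻¹ * ∑ i, g i := by
  have hT : (0:ℝ) < T := by exact_mod_cast t.pos
  have hc : (0:ℝ) < Fintype.card (Equiv.Perm (Fin T)) := by
    exact_mod_cast Fintype.card_pos
  have h := sum_perm_apply T t g
  rw [pexp]
  field_simp
  linarith

lemma pexpV_apply_eq (T d : ℕ) (t : Fin T) (g : Fin T → Fin d → ℝ) (j : Fin d) :
    pexpV T d (fun σ => g (σ t)) j = (T : ℝ)⁻¹ * ∑ i, g i j := by
  have h := pexp_eq_avg T t (fun i => g i j)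
  simpa [pexp, pexpV, Finset.sum_apply, div_eq_inv_mul] using h

lemma self_mem_agreeSet (t : ℕ) (π : Equiv.Perm (Fin T)) : π ∈ agreeSet t π := by
  classical
  simp [agreeSet]

lemma dotp_condEV (θv : Fin d → ℝ) (F : Equiv.Perm (Fin T) → Fin d → ℝ) (t : ℕ)
    (π : Equiv.Perm (Fin T)) :
    dotp θv (condEV F t π)
      = (∑ σ ∈ agreeSet t π, dotp θv (F σ)) / ((agreeSet t π).card : ℝ) := by
  rw [condEV, dotp_smul', dotp_finsetSum, div_eq_inv_mul]

lemma card_filter_lt_fin (T k : ℕ) (hk : k ≤ T) :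
    (Finset.univ.filter (fun t : Fin T => (t : ℕ) < k)).card = k := by
  classical
  have himg : (Finset.univ.filter (fun t : Fin T => (t : ℕ) < k)).image Fin.val
      = Finset.range k := by
    ext n
    simp only [Finset.mem_image, Finset.mem_filter, Finset.mem_univ, true_and,
      Finset.mem_range]
    constructor
    · rintro ⟨t, ht, rfl⟩; exact ht
    · intro hn; exact ⟨⟨n, lt_of_lt_of_le hn hk⟩, hn, rfl⟩
  rw [← Finset.card_image_of_injective _ Fin.val_injective, himg, Finset.card_range]

end Stmt13Aux

/-- Lemma OP1 for online stochastic packing in the RP model. For any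
stopping time `τ`, almost surely
`Σ_{t≤τ} E[r_t|F_{t−1}] ≥ τ·OPT + Z Σ_{t≤τ} θ_t·E[v_t − (B/T)1|F_{t−1}] − Σ_{t≤τ} Q(t)`. -/
theorem stmt13
    (d T : ℕ) (hd : 1 ≤ d) (hT : 1 ≤ T) (B : ℝ) (hB : 0 < B)
    (X : Fin T → Finset (ℝ × (Fin d → ℝ)))
    (hXne : ∀ t, (X t).Nonempty)
    (hXsub : ∀ t, (X t : Set (ℝ × (Fin d → ℝ))) ⊆ (Set.Icc (0:ℝ) 1) ×ˢ cube d)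
    (hX0 : ∀ t, ((0:ℝ), (0 : Fin d → ℝ)) ∈ X t)
    (OPT : ℝ)
    (hOPT : OPT = (T : ℝ)⁻¹ * sSup {r | ∃ p : Fin T → ℝ × (Fin d → ℝ),
      (∀ t, p t ∈ convexHull ℝ (X t : Set (ℝ × (Fin d → ℝ)))) ∧
      (∀ j : Fin d, ∑ t, (p t).2 j ≤ B) ∧ r = ∑ t, (p t).1})
    (Z : ℝ) (hZ : 0 ≤ Z)
    (θ : Equiv.Perm (Fin T) → Fin T → (Fin d → ℝ))
    (hθad : ∀ π σ : Equiv.Perm (Fin T), ∀ t : Fin T,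
      (∀ s : Fin T, s < t → X (π s) = X (σ s)) → θ π t = θ σ t)
    (hθnn : ∀ π t j, 0 ≤ θ π t j)
    (hθ1 : ∀ π t, ∑ j : Fin d, |θ π t j| ≤ 1)
    (rv : Equiv.Perm (Fin T) → Fin T → ℝ × (Fin d → ℝ))
    (hrvmem : ∀ π t, rv π t ∈ X (π t))
    (hrvmax : ∀ π t, ∀ q ∈ X (π t),
      q.1 - Z * dotp (θ π t) q.2 ≤ (rv π t).1 - Z * dotp (θ π t) (rv π t).2)
    -- `τ` is a stopping time for the filtration generated by `(A_1,…,A_t)`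
    (τ : Equiv.Perm (Fin T) → ℕ) (hτle : ∀ π, τ π ≤ T)
    (hτstop : ∀ π σ : Equiv.Perm (Fin T),
      (∀ s : Fin T, (s : ℕ) < τ π → X (π s) = X (σ s)) → τ σ = τ π)
    -- an optimal offline solution
    (pstar : Fin T → ℝ × (Fin d → ℝ))
    (hpconv : ∀ i, pstar i ∈ convexHull ℝ (X i : Set (ℝ × (Fin d → ℝ))))
    (hpbud : ∀ j : Fin d, ∑ i, (pstar i).2 j ≤ B)
    (hpopt : (T : ℝ)⁻¹ * ∑ i, (pstar i).1 = OPT) :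
    ∀ π : Equiv.Perm (Fin T),
      (τ π : ℝ) * OPT
        + Z * ∑ t ∈ Finset.univ.filter (fun t : Fin T => (t : ℕ) < τ π),
            dotp (θ π t) (condEV (fun σ => (rv σ t).2 - (B / (T : ℝ)) • ones d) (t : ℕ) π)
        - ∑ t ∈ Finset.univ.filter (fun t : Fin T => (t : ℕ) < τ π),
            (Z * supNorm (pexpV T d (fun σ => (pstar (σ t)).2)
                - condEV (fun σ => (pstar (σ t)).2) (t : ℕ) π)
              + |pexp T (fun σ => (pstar (σ t)).1)
                - condE (fun σ => (pstar (σ t)).1) (t : ℕ) π|)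
      ≤ ∑ t ∈ Finset.univ.filter (fun t : Fin T => (t : ℕ) < τ π),
          condE (fun σ => (rv σ t).1) (t : ℕ) π := by
  classical
  intro π
  have hcard : (Finset.univ.filter (fun t : Fin T => (t : ℕ) < τ π)).card = τ π :=
    card_filter_lt_fin T (τ π) (hτle π)
  have key : ∀ t ∈ Finset.univ.filter (fun t : Fin T => (t : ℕ) < τ π),
      OPT + Z * dotp (θ π t) (condEV (fun σ => (rv σ t).2 - (B / (T : ℝ)) • ones d) (t : ℕ) π)
        - (Z * supNorm (pexpV T d (fun σ => (pstar (σ t)).2)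
              - condEV (fun σ => (pstar (σ t)).2) (t : ℕ) π)
            + |pexp T (fun σ => (pstar (σ t)).1)
              - condE (fun σ => (pstar (σ t)).1) (t : ℕ) π|)
      ≤ condE (fun σ => (rv σ t).1) (t : ℕ) π := by
    intro t _
    set S := agreeSet (t : ℕ) π with hS
    have hπS : π ∈ S := self_mem_agreeSet _ _
    have hn : (0:ℝ) < (S.card : ℝ) := by
      exact_mod_cast Finset.card_pos.2 ⟨π, hπS⟩
    set θ₀ := θ π t with hθ₀
    have hθS : ∀ σ ∈ S, θ σ t = θ₀ := by
      intro σ hσ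
      rw [hS, agreeSet, Finset.mem_filter] at hσ
      exact (hθad π σ t (fun s hs => by rw [hσ.2 s hs])).symm
    -- pointwise optimality extended to the convex hull
    have hpt : ∀ σ ∈ S,
        (pstar (σ t)).1 - Z * dotp θ₀ (pstar (σ t)).2
          ≤ (rv σ t).1 - Z * dotp θ₀ (rv σ t).2 := by
      intro σ hσ
      have hmax : ∀ q ∈ X (σ t),
          q.1 - Z * dotp θ₀ q.2 ≤ (rv σ t).1 - Z * dotp θ₀ (rv σ t).2 := by
        intro q hq
        have h := hrvmax σ t q hq
        rwa [hθS σ hσ] at h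
      have hlin : IsLinearMap ℝ (fun q : ℝ × (Fin d → ℝ) => q.1 - Z * dotp θ₀ q.2) := by
        constructor
        · intro p q
          simp only [Prod.fst_add, Prod.snd_add, dotp_add']
          ring
        · intro a q
          simp only [Prod.smul_fst, Prod.smul_snd, dotp_smul', smul_eq_mul]
          ring
      have hconv : Convex ℝ {q : ℝ × (Fin d → ℝ) |
          q.1 - Z * dotp θ₀ q.2 ≤ (rv σ t).1 - Z * dotp θ₀ (rv σ t).2} :=
        convex_halfSpace_le hlin _
      exact convexHull_min (fun q hq => hmax q (Finset.mem_coe.mp hq)) hconv (hpconv (σ t))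
    have hsumpt : ∑ σ ∈ S, ((pstar (σ t)).1 - Z * dotp θ₀ (pstar (σ t)).2)
        ≤ ∑ σ ∈ S, ((rv σ t).1 - Z * dotp θ₀ (rv σ t).2) := Finset.sum_le_sum hpt
    set n : ℝ := (S.card : ℝ) with hn'
    set Rstar : ℝ := (∑ σ ∈ S, (pstar (σ t)).1) / n with hRstar
    set Rt : ℝ := (∑ σ ∈ S, (rv σ t).1) / n with hRt
    set Vstar : ℝ := (∑ σ ∈ S, dotp θ₀ (pstar (σ t)).2) / n with hVstar
    set Vt : ℝ := (∑ σ ∈ S, dotp θ₀ (rv σ t).2) / n with hVt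
    set Dc : ℝ := dotp θ₀ ((B / (T : ℝ)) • ones d) with hDc
    -- averaged optimality
    have hC : Rstar - Z * Vstar ≤ Rt - Z * Vt := by
      have hdiv : (∑ σ ∈ S, ((pstar (σ t)).1 - Z * dotp θ₀ (pstar (σ t)).2)) / n
          ≤ (∑ σ ∈ S, ((rv σ t).1 - Z * dotp θ₀ (rv σ t).2)) / n := by
        apply div_le_div_of_nonneg_right hsumpt hn.le
      rw [Finset.sum_sub_distrib, Finset.sum_sub_distrib, ← Finset.mul_sum,
        ← Finset.mul_sum, sub_div, sub_div, mul_div_assoc, mul_div_assoc] at hdiv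
      exact hdiv
    -- the shifted conditional expectation term
    have hVt' : dotp θ₀ (condEV (fun σ => (rv σ t).2 - (B / (T : ℝ)) • ones d) (t : ℕ) π)
        = Vt - Dc := by
      rw [dotp_condEV, ← hS]
      have : ∀ σ ∈ S, dotp θ₀ ((rv σ t).2 - (B / (T : ℝ)) • ones d)
          = dotp θ₀ (rv σ t).2 - Dc := fun σ _ => by rw [dotp_sub', hDc]
      rw [Finset.sum_congr rfl this, Finset.sum_sub_distrib, Finset.sum_const,
        nsmul_eq_mul, sub_div, ← hn', mul_div_cancel_left₀ _ hn.ne', hVt]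
    -- conditional expectations as averages
    have hcE : condE (fun σ => (rv σ t).1) (t : ℕ) π = Rt := rfl
    have hcEstar : condE (fun σ => (pstar (σ t)).1) (t : ℕ) π = Rstar := rfl
    have hcEVstar : dotp θ₀ (condEV (fun σ => (pstar (σ t)).2) (t : ℕ) π) = Vstar := by
      rw [dotp_condEV, ← hS, hVstar, hn']
    -- unconditional expectations
    have hE1 : pexp T (fun σ => (pstar (σ t)).1) = OPT := by
      rw [pexp_eq_avg T t (fun i => (pstar i).1)]; exact hpopt
    have hE2 : dotp θ₀ (pexpV T d (fun σ => (pstar (σ t)).2)) ≤ Dc := by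
      rw [hDc, dotp, dotp]
      apply Finset.sum_le_sum
      intro j _
      apply mul_le_mul_of_nonneg_left _ (hθnn π t j)
      rw [pexpV_apply_eq T d t (fun i => (pstar i).2) j]
      have hT0 : (0:ℝ) < T := by exact_mod_cast hT
      calc (T : ℝ)⁻¹ * ∑ i, (pstar i).2 j ≤ (T : ℝ)⁻¹ * B :=
            mul_le_mul_of_nonneg_left (hpbud j) (by positivity)
        _ = ((B / (T : ℝ)) • ones d) j := by
            simp [ones, div_eq_inv_mul, mul_comm]
    have hd0 : 0 < d := hd
    set Δ : Fin d → ℝ := pexpV T d (fun σ => (pstar (σ t)).2)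
        - condEV (fun σ => (pstar (σ t)).2) (t : ℕ) π with hΔ
    have hE3 : |dotp θ₀ Δ| ≤ supNorm Δ := abs_dotp_le_supNorm hd0 θ₀ Δ (hθ1 π t)
    have hΔeq : dotp θ₀ Δ = dotp θ₀ (pexpV T d (fun σ => (pstar (σ t)).2)) - Vstar := by
      rw [hΔ, dotp_sub', hcEVstar]
    -- combine
    rw [hVt', hcE, hE1, hcEstar]
    have h2 : OPT - Rstar ≤ |OPT - Rstar| := le_abs_self _
    have h3 : Vstar - dotp θ₀ (pexpV T d (fun σ => (pstar (σ t)).2)) ≤ supNorm Δ := by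
      rw [hΔeq] at hE3
      have h := abs_le.mp hE3
      linarith [h.1]
    have h4 : Z * Vstar ≤ Z * (Dc + supNorm Δ) := by
      apply mul_le_mul_of_nonneg_left _ hZ
      linarith
    have h5 : Z * (Vt - Dc) = Z * Vt - Z * Dc := mul_sub _ _ _
    have h6 : Z * (Dc + supNorm Δ) = Z * Dc + Z * supNorm Δ := mul_add _ _ _
    linarith
  calc (τ π : ℝ) * OPT
      + Z * ∑ t ∈ Finset.univ.filter (fun t : Fin T => (t : ℕ) < τ π),
          dotp (θ π t) (condEV (fun σ => (rv σ t).2 - (B / (T : ℝ)) • ones d) (t : ℕ) π)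
      - ∑ t ∈ Finset.univ.filter (fun t : Fin T => (t : ℕ) < τ π),
          (Z * supNorm (pexpV T d (fun σ => (pstar (σ t)).2)
              - condEV (fun σ => (pstar (σ t)).2) (t : ℕ) π)
            + |pexp T (fun σ => (pstar (σ t)).1)
              - condE (fun σ => (pstar (σ t)).1) (t : ℕ) π|)
      = ∑ t ∈ Finset.univ.filter (fun t : Fin T => (t : ℕ) < τ π),
          (OPT + Z * dotp (θ π t)
              (condEV (fun σ => (rv σ t).2 - (B / (T : ℝ)) • ones d) (t : ℕ) π)
            - (Z * supNorm (pexpV T d (fun σ => (pstar (σ t)).2)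
                  - condEV (fun σ => (pstar (σ t)).2) (t : ℕ) π)
              + |pexp T (fun σ => (pstar (σ t)).1)
                - condE (fun σ => (pstar (σ t)).1) (t : ℕ) π|)) := by
        simp only [Finset.sum_sub_distrib, Finset.sum_add_distrib, Finset.sum_const,
          hcard, nsmul_eq_mul, ← Finset.mul_sum]
    _ ≤ _ := Finset.sum_le_sum key
end
end
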